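/- arXiv:1005.1513 — 5 statements merged into one kernel-verified Lean document; each statement's English description precedes it below -/
import Mathlib

section
/- Let W be an orientable quadratic word of genus m in a countable alphabet (each letter occurs exactly once with exponent +1 and once with exponent −1) that is cyclically reduced and irredundant (i.e., a Wicks form of genus m). Then the length of W is at most 12m − 6. -/
namespace WicksForms

/-- A signed letter in the countable alphabet `ℕ`. -/
abbrev Letter := ℕ × Bool

/-- Inverse of a signed letter. -/
def linv (l : Letter) : Letter := (l.1, !l.2)

/-- The letter of a cyclic word at position `i` (indices taken mod the length). -/
def cyc (W : List Letter) (i : ℕ) : Letter := W[i % W.length]!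

/-- `W` is orientable quadratic: every letter that occurs appears exactly twice,
once with exponent `+1` and once with exponent `-1`. -/
def Quadratic (W : List Letter) : Prop :=
  ∀ a : ℕ, (W.count (a, true) = 1 ∧ W.count (a, false) = 1) ∨
    (W.count (a, true) = 0 ∧ W.count (a, false) = 0)

/-- `W` is (freely) cyclically reduced as a cyclic word. -/
def CyclicallyReduced (W : List Letter) : Prop :=
  W ≠ [] ∧ ∀ i : ℕ, cyc W (i + 1) ≠ linv (cyc W i)

/-- `W` is redundant: there are signed letters `x` and `y` occurring in `W` which only
occur in `W` as subwords of the form `(x y)^{±1}` (read cyclically). -/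
def Redundant (W : List Letter) : Prop :=
  ∃ x y : Letter, x ∈ W ∧ y ∈ W ∧
    (∀ i : ℕ, cyc W i = x → cyc W (i + 1) = y) ∧
    (∀ i : ℕ, cyc W (i + 1) = y → cyc W i = x) ∧
    (∀ i : ℕ, cyc W i = linv y → cyc W (i + 1) = linv x) ∧
    (∀ i : ℕ, cyc W (i + 1) = linv x → cyc W i = linv y)

/-- The element of the free group on `ℕ` represented by the word `W`. -/
def elt (W : List Letter) : FreeGroup ℕ :=
  (W.map fun l => if l.2 then FreeGroup.of l.1 else (FreeGroup.of l.1)⁻¹).prod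

/-- `g` has genus `m` in the free group: `m` is the least `k` such that some conjugate
of `g` is a product of `k` commutators. -/
def IsGenus (g : FreeGroup ℕ) (m : ℕ) : Prop :=
  IsLeast {k : ℕ | ∃ h : FreeGroup ℕ, ∃ x y : Fin k → FreeGroup ℕ,
    h * g * h⁻¹ = (List.ofFn fun i => x i * y i * (x i)⁻¹ * (y i)⁻¹).prod} m

/-- Integer Heisenberg group. -/
structure Hb where
  x : ℤ
  y : ℤ
  z : ℤ

namespace Hb

@[ext] theorem ext' {a b : Hb} (hx : a.x = b.x) (hy : a.y = b.y) (hz : a.z = b.z) : a = b := by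
  cases a; cases b; simp_all

instance : Mul Hb := ⟨fun a b => ⟨a.x + b.x, a.y + b.y, a.z + b.z + a.x * b.y⟩⟩
instance : One Hb := ⟨⟨0, 0, 0⟩⟩
instance : Inv Hb := ⟨fun a => ⟨-a.x, -a.y, -a.z + a.x * a.y⟩⟩

@[simp] theorem mul_x (a b : Hb) : (a * b).x = a.x + b.x := rfl
@[simp] theorem mul_y (a b : Hb) : (a * b).y = a.y + b.y := rfl
@[simp] theorem mul_z (a b : Hb) : (a * b).z = a.z + b.z + a.x * b.y := rfl
@[simp] theorem one_x : (1 : Hb).x = 0 := rfl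
@[simp] theorem one_y : (1 : Hb).y = 0 := rfl
@[simp] theorem one_z : (1 : Hb).z = 0 := rfl
@[simp] theorem inv_x (a : Hb) : (a⁻¹).x = -a.x := rfl
@[simp] theorem inv_y (a : Hb) : (a⁻¹).y = -a.y := rfl
@[simp] theorem inv_z (a : Hb) : (a⁻¹).z = -a.z + a.x * a.y := rfl

instance : Group Hb where
  mul_assoc a b c := by ext <;> simp <;> ring
  one_mul a := by ext <;> simp
  mul_one a := by ext <;> simp
  inv_mul_cancel a := by ext <;> simp <;> ring

/-- conjugation fixes central elements -/
theorem conj_central (h g : Hb) (hx : g.x = 0) (hy : g.y = 0) : h * g * h⁻¹ = g := by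
  ext <;> simp [hx, hy] <;> ring

theorem comm_z (p q : Hb) :
    p * q * p⁻¹ * q⁻¹ = ⟨0, 0, p.x * q.y - p.y * q.x⟩ := by
  ext <;> simp <;> ring

end Hb

/-- indicator -/
def ind (a c : ℕ) : ℤ := if c = a then 1 else 0

/-- The Heisenberg representation attached to the ordered pair `(a,b)`. -/
def φ (a b : ℕ) : FreeGroup ℕ →* Hb := FreeGroup.lift fun c => ⟨ind a c, ind b c, 0⟩

@[simp] theorem φ_of (a b c : ℕ) : φ a b (FreeGroup.of c) = ⟨ind a c, ind b c, 0⟩ :=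
  FreeGroup.lift_apply_of

/-- x-projection as a hom into `Multiplicative ℤ`. -/
def πx : Hb →* Multiplicative ℤ where
  toFun h := Multiplicative.ofAdd h.x
  map_one' := rfl
  map_mul' a b := by simp [← ofAdd_add]

def πy : Hb →* Multiplicative ℤ where
  toFun h := Multiplicative.ofAdd h.y
  map_one' := rfl
  map_mul' a b := by simp [← ofAdd_add]

theorem φ_x_eq (a b b' : ℕ) (g : FreeGroup ℕ) : (φ a b g).x = (φ a b' g).x := by
  have : πx.comp (φ a b) = πx.comp (φ a b') := by
    apply FreeGroup.ext_hom; intro c; simp [πx]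
  have := congrArg (fun f => Multiplicative.toAdd (f g)) this
  simpa [πx] using this

theorem φ_y_eq (a a' b : ℕ) (g : FreeGroup ℕ) : (φ a b g).y = (φ a' b g).y := by
  have : πy.comp (φ a b) = πy.comp (φ a' b) := by
    apply FreeGroup.ext_hom; intro c; simp [πy]
  have := congrArg (fun f => Multiplicative.toAdd (f g)) this
  simpa [πy] using this

theorem φ_xy (a b : ℕ) (g : FreeGroup ℕ) : (φ a b g).y = (φ b a g).x := by
  have : πy.comp (φ a b) = πx.comp (φ b a) := by
    apply FreeGroup.ext_hom; intro c; simp [πx, πy]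
  have := congrArg (fun f => Multiplicative.toAdd (f g)) this
  simpa [πx, πy] using this


/-! ### words and `elt` computations -/

theorem elt_nil : elt [] = 1 := rfl

theorem elt_cons (t : Letter) (l : List Letter) :
    elt (t :: l) = (if t.2 then FreeGroup.of t.1 else (FreeGroup.of t.1)⁻¹) * elt l := by
  simp [elt]

@[simp] theorem φ_letter_x (a b : ℕ) (t : Letter) :
    (φ a b (if t.2 then FreeGroup.of t.1 else (FreeGroup.of t.1)⁻¹)).x =
      if t.2 then ind a t.1 else -ind a t.1 := by
  by_cases h : t.2 <;> simp [h]

@[simp] theorem φ_letter_y (a b : ℕ) (t : Letter) :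
    (φ a b (if t.2 then FreeGroup.of t.1 else (FreeGroup.of t.1)⁻¹)).y =
      if t.2 then ind b t.1 else -ind b t.1 := by
  by_cases h : t.2 <;> simp [h]

@[simp] theorem φ_letter_z (a b : ℕ) (hab : a ≠ b) (t : Letter) :
    (φ a b (if t.2 then FreeGroup.of t.1 else (FreeGroup.of t.1)⁻¹)).z = 0 := by
  have : ind a t.1 * ind b t.1 = 0 := by
    unfold ind
    rcases eq_or_ne t.1 a with h | h <;> simp [h]
    · intro h'; exact absurd (h ▸ h') hab
  by_cases h : t.2 <;> simp [h, this]

theorem φ_elt_x (a b : ℕ) (l : List Letter) :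
    (φ a b (elt l)).x = (l.count (a, true) : ℤ) - (l.count (a, false) : ℤ) := by
  induction l with
  | nil => simp [elt_nil]
  | cons t l ih =>
    rw [elt_cons, map_mul]
    rcases t with ⟨c, e⟩
    have hcount : ∀ e' : Bool, ((c, e) :: l).count (a, e')
        = l.count (a, e') + if c = a ∧ e = e' then 1 else 0 := by
      intro e'
      simp [List.count_cons, Prod.mk.injEq]
    rw [Hb.mul_x, φ_letter_x, ih, hcount true, hcount false]
    rcases eq_or_ne c a with h1 | h1 <;> rcases e with _ | _ <;>
      simp [ind, h1] <;> push_cast <;> ring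

theorem φ_elt_y (a b : ℕ) (l : List Letter) :
    (φ a b (elt l)).y = (l.count (b, true) : ℤ) - (l.count (b, false) : ℤ) := by
  rw [φ_xy]; exact φ_elt_x b a l



/-! ### mod-2 pair counting -/

/-- number of occurrences of the letter `b` mod 2 (always 0 for letters of a
quadratic word, but used for general lists). -/
def nb (b : ℕ) (l : List Letter) : ZMod 2 := ((l.countP fun t => decide (t.1 = b)) : ℕ)

/-- mod 2 number of ordered pairs `i < j` with the letter at `i` being `a` and
the letter at `j` being `b`. -/
def Pz (a b : ℕ) : List Letter → ZMod 2
  | [] => 0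
  | t :: l => Pz a b l + (if t.1 = a then nb b l else 0)

@[simp] theorem nb_nil (b : ℕ) : nb b [] = 0 := rfl

theorem nb_cons (b : ℕ) (t : Letter) (l : List Letter) :
    nb b (t :: l) = (if t.1 = b then 1 else 0) + nb b l := by
  unfold nb
  rw [List.countP_cons]
  by_cases h : t.1 = b <;> simp [h] <;> push_cast <;> ring

theorem countP_eq_counts (b : ℕ) (l : List Letter) :
    (l.countP fun t => decide (t.1 = b)) = l.count (b, true) + l.count (b, false) := by
  induction l with
  | nil => simp
  | cons t l ih =>
    rcases t with ⟨c, e⟩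
    rw [List.countP_cons, List.count_cons, List.count_cons, ih]
    rcases eq_or_ne c b with h | h <;> rcases e with _ | _ <;>
      simp [h, Prod.mk.injEq] <;> omega

theorem nb_eq_cast (b : ℕ) (l : List Letter) :
    (((l.count (b, true) : ℤ) - (l.count (b, false) : ℤ) : ℤ) : ZMod 2) = nb b l := by
  unfold nb
  rw [countP_eq_counts]
  push_cast
  rw [CharTwo.sub_eq_add]

theorem z_elt_mod2 (a b : ℕ) (hab : a ≠ b) (l : List Letter) :
    (((φ a b (elt l)).z : ℤ) : ZMod 2) = Pz a b l := by
  induction l with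
  | nil => simp [elt_nil, Pz]
  | cons t l ih =>
    rw [elt_cons, map_mul, Hb.mul_z, φ_letter_z a b hab, φ_letter_x, φ_elt_y]
    show ((((0 : ℤ) + (φ a b (elt l)).z + _ : ℤ) : ZMod 2)) = Pz a b (t :: l)
    push_cast
    rw [ih]
    show _ = Pz a b l + _
    have hx : (((if t.2 = true then ind a t.1 else -ind a t.1) : ℤ) : ZMod 2)
        = if t.1 = a then 1 else 0 := by
      unfold ind
      by_cases h : t.2 = true <;> by_cases h2 : t.1 = a <;>
        simp [h, h2, CharTwo.neg_eq]
    have hy := nb_eq_cast b l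
    push_cast at hx hy ⊢
    rw [hx, hy]
    by_cases h : t.1 = a <;> simp [h]

/-! ### products of commutators -/

theorem prod_central : ∀ {k : ℕ} (d : Fin k → Hb), (∀ i, (d i).x = 0) → (∀ i, (d i).y = 0) →
    (List.ofFn d).prod = ⟨0, 0, ∑ i, (d i).z⟩ := by
  intro k
  induction k with
  | zero => intro d _ _; simp; rfl
  | succ k ih =>
    intro d hx hy
    rw [List.ofFn_succ, List.prod_cons, ih _ (fun i => hx i.succ) (fun i => hy i.succ)]
    ext <;> simp [hx 0, hy 0, Fin.sum_univ_succ]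

theorem z_elt_eq_sum (a b : ℕ) (W : List Letter)
    (hx0 : (φ a b (elt W)).x = 0) (hy0 : (φ a b (elt W)).y = 0)
    {k : ℕ} (h : FreeGroup ℕ) (x y : Fin k → FreeGroup ℕ)
    (hEq : h * elt W * h⁻¹ = (List.ofFn fun i => x i * y i * (x i)⁻¹ * (y i)⁻¹).prod) :
    (φ a b (elt W)).z = ∑ i : Fin k,
      ((φ a b (x i)).x * (φ a b (y i)).y - (φ a b (x i)).y * (φ a b (y i)).x) := by
  have happ := congrArg (φ a b) hEq
  rw [map_mul, map_mul, map_inv] at happ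
  rw [Hb.conj_central _ _ hx0 hy0] at happ
  rw [map_list_prod, List.map_ofFn] at happ
  have hcomm : ∀ i : Fin k, (φ a b) (x i * y i * (x i)⁻¹ * (y i)⁻¹)
      = ⟨0, 0, (φ a b (x i)).x * (φ a b (y i)).y - (φ a b (x i)).y * (φ a b (y i)).x⟩ := by
    intro i
    simp only [map_mul, map_inv]
    exact Hb.comm_z _ _
  have : (List.ofFn ((φ a b) ∘ fun i => x i * y i * (x i)⁻¹ * (y i)⁻¹)).prod
      = ⟨0, 0, ∑ i : Fin k,
        ((φ a b (x i)).x * (φ a b (y i)).y - (φ a b (x i)).y * (φ a b (y i)).x)⟩ := by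
    have := prod_central (fun i => ((φ a b) ∘ fun i => x i * y i * (x i)⁻¹ * (y i)⁻¹) i)
      (by intro i; simp [hcomm i]) (by intro i; simp [hcomm i])
    rw [this]
    congr 1
    apply Finset.sum_congr rfl
    intro i _
    simp [hcomm i]
  rw [this] at happ
  have := congrArg Hb.z happ
  simpa using this


/-! ### Fin-indexed forms of the counting functions -/

theorem nb_eq_sum (b : ℕ) (l : List Letter) :
    nb b l = ∑ j : Fin l.length, if (l.get j).1 = b then 1 else 0 := by
  induction l with
  | nil => simp
  | cons t l ih =>
    rw [nb_cons, ih]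
    simp only [List.length_cons]
    rw [Fin.sum_univ_succ]
    simp
    by_cases h : t.1 = b <;> simp [h]

theorem Pz_eq_sum (a b : ℕ) (l : List Letter) :
    Pz a b l = ∑ i : Fin l.length, ∑ j : Fin l.length,
      if i.val < j.val ∧ (l.get i).1 = a ∧ (l.get j).1 = b then 1 else 0 := by
  induction l with
  | nil => simp [Pz]
  | cons t l ih =>
    show Pz a b l + _ = _
    rw [ih]
    simp only [List.length_cons]
    rw [Fin.sum_univ_succ]
    have h0 : (∑ j : Fin (l.length + 1), if (0 : Fin (l.length + 1)).val < j.val ∧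
        ((t :: l).get (0 : Fin (l.length + 1))).1 = a ∧ ((t :: l).get j).1 = b then 1 else 0 : ZMod 2)
        = if t.1 = a then nb b l else 0 := by
      rw [Fin.sum_univ_succ]
      by_cases h : t.1 = a <;> simp [h, nb_eq_sum]
    have h1 : ∀ i : Fin l.length, (∑ j : Fin (l.length + 1), if (i.succ).val < j.val ∧
        ((t :: l).get i.succ).1 = a ∧ ((t :: l).get j).1 = b then 1 else 0 : ZMod 2)
        = ∑ j : Fin l.length, if i.val < j.val ∧ (l.get i).1 = a ∧ (l.get j).1 = b
          then 1 else 0 := by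
      intro i
      rw [Fin.sum_univ_succ]
      simp
    rw [h0, Finset.sum_congr rfl fun i _ => h1 i, add_comm]

/-! ### matrix rank helpers -/

theorem rank_add_le' {ι : Type*} [Fintype ι] [DecidableEq ι]
    (A B : Matrix ι ι (ZMod 2)) : (A + B).rank ≤ A.rank + B.rank := by
  classical
  unfold Matrix.rank
  have hmv : (A + B).mulVecLin = A.mulVecLin + B.mulVecLin := by
    ext v i
    simp [Matrix.mulVecLin, Matrix.add_mulVec]
  rw [hmv]
  have hle : LinearMap.range (A.mulVecLin + B.mulVecLin) ≤
      LinearMap.range A.mulVecLin ⊔ LinearMap.range B.mulVecLin := by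
    rintro _ ⟨v, rfl⟩
    exact Submodule.add_mem_sup (LinearMap.mem_range_self _ v) (LinearMap.mem_range_self _ v)
  calc Module.finrank (ZMod 2) (LinearMap.range (A.mulVecLin + B.mulVecLin))
      ≤ Module.finrank (ZMod 2)
        ↥(LinearMap.range A.mulVecLin ⊔ LinearMap.range B.mulVecLin) :=
        Submodule.finrank_mono hle
    _ ≤ _ := by
        have := Submodule.finrank_sup_add_finrank_inf_eq
          (LinearMap.range A.mulVecLin) (LinearMap.range B.mulVecLin)
        omega

theorem rank_vecMulVec_le {ι : Type*} [Fintype ι] [DecidableEq ι]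
    (x y : ι → ZMod 2) : (Matrix.vecMulVec x y).rank ≤ 1 := by
  rw [Matrix.vecMulVec_eq (Fin 1)]
  exact le_trans (Matrix.rank_mul_le_left _ _)
    (le_trans (Matrix.rank_le_card_width _) (by simp))

theorem rank_sum_le {ι : Type*} [Fintype ι] [DecidableEq ι] {k : ℕ}
    (M : Fin k → Matrix ι ι (ZMod 2)) (h : ∀ i, (M i).rank ≤ 2) :
    (∑ i, M i).rank ≤ 2 * k := by
  classical
  have key : ∀ (s : Finset (Fin k)), (∑ i ∈ s, M i).rank ≤ 2 * s.card := by
    intro s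
    induction s using Finset.induction with
    | empty => simp
    | insert a s' hni ih =>
      rw [Finset.sum_insert hni, Finset.card_insert_of_notMem hni]
      calc (M a + ∑ i ∈ s', M i).rank ≤ (M a).rank + (∑ i ∈ s', M i).rank := rank_add_le' _ _
      _ ≤ 2 + 2 * s'.card := add_le_add (h a) ih
      _ = 2 * (s'.card + 1) := by ring
  simpa using key Finset.univ

theorem nodup_aux : ∀ (l : List Letter), (∀ p : Letter, l.count p ≤ 1) → l.Nodup := by
  intro l
  induction l with
  | nil => intro _; simp
  | cons t l ih =>
    intro h
    rw [List.nodup_cons]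
    constructor
    · have := h t
      rw [List.count_cons_self] at this
      have h0 : l.count t = 0 := by omega
      exact List.count_eq_zero.mp h0
    · refine ih fun p => le_trans ?_ (h p)
      rw [List.count_cons]
      omega

theorem nodup_of_quadratic {W : List Letter} (hquad : Quadratic W) : W.Nodup := by
  apply nodup_aux
  rintro ⟨a, e⟩
  rcases hquad a with ⟨h1, h2⟩ | ⟨h1, h2⟩ <;> cases e <;> simp [h1, h2]

set_option maxHeartbeats 3200000 in
/-- A Wicks form of genus `m` (an orientable quadratic cyclic word, cyclically reduced
and irredundant, of genus `m` in the free group) has length at most `12m - 6`. -/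
theorem wicks_form_length_le (W : List Letter) (m : ℕ)
    (hquad : Quadratic W) (hred : CyclicallyReduced W) (hirred : ¬ Redundant W)
    (hgen : IsGenus (elt W) m) :
    (W.length : ℤ) ≤ 12 * (m : ℤ) - 6 := by
  classical
  obtain ⟨⟨h, xs, ys, hEq⟩, -⟩ := hgen
  have hn : W.length ≠ 0 := fun h0 => hred.1 (List.length_eq_zero_iff.mp h0)
  set n := W.length with hnW
  haveI : NeZero n := ⟨hn⟩
  have hnpos : 0 < n := Nat.pos_of_ne_zero hn
  -- ## basic word combinatorics
  have hc1 : ∀ s : Fin n, W.count (W.get s) = 1 := by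
    intro s
    rcases hq : W.get s with ⟨a, e⟩
    have hm : (⟨a, e⟩ : Letter) ∈ W := hq ▸ List.get_mem W s
    have hpos : 0 < W.count (⟨a, e⟩ : Letter) := List.count_pos_iff.mpr hm
    rcases hquad a with ⟨h1, h2⟩ | ⟨h1, h2⟩ <;> cases e <;> simp_all
  have hnodup : W.Nodup := nodup_of_quadratic hquad
  have posinj : ∀ s t : Fin n, W.get s = W.get t → s = t := by
    intro s t hst
    exact (List.Nodup.get_inj_iff hnodup).mp hst
  obtain ⟨σ, hσ⟩ : ∃ σ : Fin n → Fin n, ∀ s, W.get (σ s) = linv (W.get s) := by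
    have hex : ∀ s : Fin n, ∃ t : Fin n, W.get t = linv (W.get s) := by
      intro s
      rcases hq : W.get s with ⟨a, e⟩
      have hm : (⟨a, e⟩ : Letter) ∈ W := hq ▸ List.get_mem W s
      have hpos : 0 < W.count (⟨a, e⟩ : Letter) := List.count_pos_iff.mpr hm
      have hmem2 : linv (⟨a, e⟩ : Letter) ∈ W := by
        have : 0 < W.count (linv (⟨a, e⟩ : Letter)) := by
          rcases hquad a with ⟨h1, h2⟩ | ⟨h1, h2⟩ <;> cases e <;> simp_all [linv]
        exact List.count_pos_iff.mp this
      obtain ⟨t, ht⟩ := List.mem_iff_get.mp hmem2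
      exact ⟨t, by rw [ht]⟩
    exact ⟨fun s => Classical.choose (hex s), fun s => Classical.choose_spec (hex s)⟩
  have hlinv2 : ∀ l : Letter, linv (linv l) = l := by intro l; simp [linv]
  have hσσ : ∀ s, σ (σ s) = s := by
    intro s; exact posinj _ _ (by rw [hσ, hσ, hlinv2])
  have hσne : ∀ s, σ s ≠ s := by
    intro s hc
    have := hσ s
    rw [hc] at this
    rcases hW : W.get s with ⟨c, e⟩
    rw [hW] at this
    simp [linv] at this
  have hσfst : ∀ s, (W.get (σ s)).1 = (W.get s).1 := by
    intro s; rw [hσ]; rfl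
  -- ## Fin arithmetic and `cyc`
  have hval1 : ∀ s : Fin n, (s + 1).val = (s.val + 1) % n := by
    intro s
    simp only [Fin.add_def, Fin.val_one']
    conv_rhs => rw [Nat.add_mod]
    rw [Nat.mod_eq_of_lt s.isLt]
  have hcyc : ∀ i : ℕ, cyc W i = W.get ⟨i % n, Nat.mod_lt i hnpos⟩ := by
    intro i
    simp only [cyc]
    rw [getElem!_pos W (i % W.length) (Nat.mod_lt i hnpos)]
    rfl
  have hmodsucc : ∀ i : ℕ, (⟨(i + 1) % n, Nat.mod_lt _ hnpos⟩ : Fin n)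
      = ⟨i % n, Nat.mod_lt i hnpos⟩ + 1 := by
    intro i
    rw [Fin.ext_iff, hval1]
    show (i + 1) % n = (i % n + 1) % n
    rw [Nat.add_mod i 1 n, Nat.add_mod (i % n) 1 n, Nat.mod_mod_of_dvd i dvd_rfl]
  have hredpos : ∀ s : Fin n, W.get (s + 1) ≠ linv (W.get s) := by
    intro s
    have hs : (⟨s.val % n, Nat.mod_lt s.val hnpos⟩ : Fin n) = s :=
      Fin.ext (Nat.mod_eq_of_lt s.isLt)
    have := hred.2 s.val
    rw [hcyc s.val, hcyc (s.val + 1), hmodsucc, hs] at this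
    exact this
  -- ## the vertex permutation τ
  set τ : Equiv.Perm (Fin n) :=
    (Function.Involutive.toPerm σ hσσ).trans (Equiv.addRight 1) with hτdef
  have hτ : ∀ s, τ s = σ s + 1 := fun s => rfl
  have hτfix : ∀ s, τ s ≠ s := by
    intro s hcon
    rw [hτ] at hcon
    exact hredpos (σ s) (by rw [hcon, hσ, hlinv2])
  have hτ2fix : ∀ s, τ (τ s) ≠ s := by
    intro s hcon
    rw [hτ, hτ] at hcon
    -- positions: u := σ s, p := σ (u + 1), with p + 1 = s
    apply hirred
    refine ⟨W.get (σ (σ s + 1)), W.get s, List.get_mem W _, List.get_mem W _, ?_, ?_, ?_, ?_⟩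
    · -- x is always followed by y
      intro i hi
      rw [hcyc] at hi ⊢
      rw [hmodsucc, posinj _ _ hi, hcon]
    · intro i hi
      rw [hcyc] at hi ⊢
      rw [hmodsucc] at hi
      have := posinj _ _ hi
      have h2 : (⟨i % n, Nat.mod_lt i hnpos⟩ : Fin n) = σ (σ s + 1) := by
        have := congrArg (fun t => t + (-1 : Fin n)) (this.trans hcon.symm)
        simpa [add_assoc] using this
      rw [h2]
    · intro i hi
      rw [hcyc] at hi ⊢
      rw [← hσ] at hi
      rw [hmodsucc, posinj _ _ hi, ← hσ, hσσ]
    · intro i hi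
      rw [hcyc] at hi ⊢
      rw [← hσ, hσσ] at hi
      rw [hmodsucc] at hi
      have := posinj _ _ hi
      have h2 : (⟨i % n, Nat.mod_lt i hnpos⟩ : Fin n) = σ s := by
        have := congrArg (fun t => t + (-1 : Fin n)) this
        simpa [add_assoc] using this
      rw [h2, hσ]
  -- ## the letters and the fibers
  set A : Finset ℕ := Finset.image (fun s : Fin n => (W.get s).1) Finset.univ with hA
  have memA : ∀ s : Fin n, (W.get s).1 ∈ A :=
    fun s => Finset.mem_image_of_mem _ (Finset.mem_univ s)
  have hsame : ∀ s t : Fin n, (W.get t).1 = (W.get s).1 →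
      t = s ∨ t = σ s := by
    intro s t hfst
    have : W.get t = W.get s ∨ W.get t = linv (W.get s) := by
      rcases h1 : W.get t with ⟨a, e⟩
      rcases h2 : W.get s with ⟨a', e'⟩
      rw [h1, h2] at hfst
      simp only at hfst
      subst hfst
      cases e <;> cases e' <;> simp [linv]
    rcases this with h | h
    · exact Or.inl (posinj _ _ h)
    · exact Or.inr (posinj _ _ (h.trans (hσ s).symm))
  have fiber_eq : ∀ s : Fin n,
      Finset.univ.filter (fun t : Fin n => (W.get t).1 = (W.get s).1) = {s, σ s} := by
    intro s
    ext t
    simp only [Finset.mem_filter, Finset.mem_univ, true_and, Finset.mem_insert,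
      Finset.mem_singleton]
    constructor
    · exact hsame s t
    · rintro (rfl | rfl)
      · rfl
      · exact hσfst s
  have hcardA : n = 2 * A.card := by
    have hfib := Finset.card_eq_sum_card_fiberwise
      (f := fun s : Fin n => (W.get s).1) (s := Finset.univ) (t := A)
      (fun s _ => memA s)
    have hcard2 : ∀ b ∈ A, (Finset.univ.filter
        (fun t : Fin n => (W.get t).1 = b)).card = 2 := by
      intro b hb
      obtain ⟨s, -, hs⟩ := Finset.mem_image.mp hb
      subst hs
      rw [fiber_eq s]
      rw [Finset.card_insert_of_notMem (by simpa using (hσne s).symm),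
        Finset.card_singleton]
    rw [Finset.sum_congr rfl hcard2] at hfib
    simpa [mul_comm] using hfib
  -- ## the vertices
  letI st : Setoid (Fin n) := ⟨τ.SameCycle,
    ⟨fun _ => Equiv.Perm.SameCycle.refl _ _, fun hxy => hxy.symm, fun hxy hyz => hxy.trans hyz⟩⟩
  haveI : Fintype (Quotient st) := Fintype.ofFinite _
  set V := Fintype.card (Quotient st) with hV
  have h3V : 3 * V ≤ n := by
    have key : ∀ (o : Fin n) (d : ℕ), d = 1 ∨ d = 2 → (τ ^ d) o ≠ o := by
      intro o d hd
      rcases hd with rfl | rfl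
      · simpa using hτfix o
      · intro hcon
        exact hτ2fix o (by
          have : (τ ^ 2) o = τ (τ o) := by
            rw [pow_succ, pow_one]; rfl
          rw [← this, hcon])
    have hinj : Function.Injective
        (fun p : Quotient st × Fin 3 => (τ ^ (p.2 : ℕ)) p.1.out) := by
      rintro ⟨q, k⟩ ⟨q', k'⟩ heq
      simp only at heq
      have hsc : τ.SameCycle q.out q'.out := by
        refine ⟨(k : ℤ) - (k' : ℤ), ?_⟩
        have hstep : (τ ^ ((k : ℤ) - (k' : ℤ))) q.out
            = (τ ^ ((k' : ℕ)))⁻¹ ((τ ^ ((k : ℕ))) q.out) := by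
          rw [← Equiv.Perm.mul_apply]
          congr 1
          rw [← zpow_natCast τ (k : ℕ), ← zpow_natCast τ (k' : ℕ), ← zpow_neg, ← zpow_add]
          congr 1
          ring
        rw [hstep, heq]
        exact Equiv.symm_apply_apply _ _
      have hq : q = q' := by
        have h1 := Quotient.sound (s := st) hsc
        rwa [Quotient.out_eq, Quotient.out_eq] at h1
      subst hq
      have ho : (τ ^ (k : ℕ)) q.out = (τ ^ (k' : ℕ)) q.out := heq
      have hkk : (k : ℕ) = (k' : ℕ) := by
        rcases lt_trichotomy (k : ℕ) (k' : ℕ) with hlt | heq' | hlt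
        · exfalso
          have hd : (τ ^ ((k' : ℕ) - (k : ℕ))) ((τ ^ (k : ℕ)) q.out)
              = (τ ^ (k' : ℕ)) q.out := by
            rw [← Equiv.Perm.mul_apply, ← pow_add]
            have harith : (k' : ℕ) - (k : ℕ) + (k : ℕ) = (k' : ℕ) := by omega
            rw [harith]
          rw [← ho] at hd
          have hk3 : (k : ℕ) < 3 := k.isLt
          have hk3' : (k' : ℕ) < 3 := k'.isLt
          have h12 : (k' : ℕ) - (k : ℕ) = 1 ∨ (k' : ℕ) - (k : ℕ) = 2 := by omega
          exact key ((τ ^ (k : ℕ)) q.out) ((k' : ℕ) - (k : ℕ)) h12 hd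
        · exact heq'
        · exfalso
          have hd : (τ ^ ((k : ℕ) - (k' : ℕ))) ((τ ^ (k' : ℕ)) q.out)
              = (τ ^ (k : ℕ)) q.out := by
            rw [← Equiv.Perm.mul_apply, ← pow_add]
            have harith : (k : ℕ) - (k' : ℕ) + (k' : ℕ) = (k : ℕ) := by omega
            rw [harith]
          rw [ho] at hd
          have hk3 : (k : ℕ) < 3 := k.isLt
          have hk3' : (k' : ℕ) < 3 := k'.isLt
          have h12 : (k : ℕ) - (k' : ℕ) = 1 ∨ (k : ℕ) - (k' : ℕ) = 2 := by omega
          exact key ((τ ^ (k' : ℕ)) q.out) ((k : ℕ) - (k' : ℕ)) h12 hd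
      exact Prod.ext (by rfl) (Fin.ext hkk)
    have := Fintype.card_le_of_injective _ hinj
    simpa [Fintype.card_prod, mul_comm] using this
  have hinv_lift : ∀ (g : Fin n → ZMod 2), (∀ s, g (τ s) = g s) →
      ∀ s t : Fin n, τ.SameCycle s t → g s = g t := by
    intro g hg
    have hN : ∀ (k : ℕ) (s : Fin n), g ((τ ^ k) s) = g s := by
      intro k
      induction k with
      | zero => intro s; simp
      | succ k ih =>
        intro s
        have : (τ ^ (k + 1)) s = τ ((τ ^ k) s) := by
          rw [pow_succ']; rfl
        rw [this, hg, ih]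
    have hInv : ∀ s : Fin n, g (τ⁻¹ s) = g s := by
      intro s
      conv_rhs => rw [← Equiv.apply_symm_apply τ s]
      exact (hg (τ⁻¹ s)).symm
    have hNi : ∀ (k : ℕ) (s : Fin n), g ((τ⁻¹ ^ k) s) = g s := by
      intro k
      induction k with
      | zero => intro s; simp
      | succ k ih =>
        intro s
        have : (τ⁻¹ ^ (k + 1)) s = τ⁻¹ ((τ⁻¹ ^ k) s) := by
          rw [pow_succ']; rfl
        rw [this, hInv, ih]
    rintro s t ⟨i, hi⟩
    rcases i with k | k
    · rw [Int.ofNat_eq_coe, zpow_natCast] at hi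
      rw [← hi, hN]
    · rw [zpow_negSucc, ← inv_pow] at hi
      rw [← hi, hNi]
  -- ## the linking matrix
  set T : Matrix ↥A ↥A (ZMod 2) :=
    fun a b => if (a : ℕ) = (b : ℕ) then 0 else (((φ a b (elt W)).z : ℤ) : ZMod 2) with hTdef
  have hx0 : ∀ a b : ℕ, (φ a b (elt W)).x = 0 := by
    intro a b
    rw [φ_elt_x]
    rcases hquad a with ⟨h1, h2⟩ | ⟨h1, h2⟩ <;> rw [h1, h2] <;> ring
  have hy0 : ∀ a b : ℕ, (φ a b (elt W)).y = 0 := by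
    intro a b
    rw [φ_xy]
    exact hx0 b a
  have hrankT : T.rank ≤ 2 * m := by
    have hXY : T = ∑ i : Fin m,
        (Matrix.vecMulVec (fun a : ↥A => (((φ (a : ℕ) 0 (xs i)).x : ℤ) : ZMod 2))
            (fun b : ↥A => (((φ (b : ℕ) 0 (ys i)).x : ℤ) : ZMod 2))
          + Matrix.vecMulVec (fun b : ↥A => (((φ (b : ℕ) 0 (ys i)).x : ℤ) : ZMod 2))
            (fun a : ↥A => (((φ (a : ℕ) 0 (xs i)).x : ℤ) : ZMod 2))) := by
      funext a b
      rw [Matrix.sum_apply]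
      simp only [Matrix.add_apply, Matrix.vecMulVec_apply, hTdef]
      by_cases hab : (a : ℕ) = (b : ℕ)
      · have hab' : a = b := Subtype.ext hab
        subst hab'
        rw [if_pos rfl, eq_comm]
        apply Finset.sum_eq_zero
        intro i _
        rw [mul_comm (((φ (a : ℕ) 0 (ys i)).x : ℤ) : ZMod 2)]
        exact CharTwo.add_self_eq_zero _
      · simp only [if_neg hab]
        have hz := z_elt_eq_sum (a : ℕ) (b : ℕ) W (hx0 a b) (hy0 a b) h xs ys hEq
        rw [hz]
        push_cast
        apply Finset.sum_congr rfl
        intro i _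
        rw [CharTwo.sub_eq_add]
        have e1 : ((φ (a : ℕ) (b : ℕ) (xs i)).x) = ((φ (a : ℕ) 0 (xs i)).x) := φ_x_eq _ _ _ _
        have e2 : ((φ (a : ℕ) (b : ℕ) (ys i)).y) = ((φ (b : ℕ) 0 (ys i)).x) := by
          rw [φ_xy]; exact φ_x_eq _ _ _ _
        have e3 : ((φ (a : ℕ) (b : ℕ) (xs i)).y) = ((φ (b : ℕ) 0 (xs i)).x) := by
          rw [φ_xy]; exact φ_x_eq _ _ _ _
        have e4 : ((φ (a : ℕ) (b : ℕ) (ys i)).x) = ((φ (a : ℕ) 0 (ys i)).x) := φ_x_eq _ _ _ _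
        rw [e1, e2, e3, e4]
        ring
    rw [hXY]
    apply rank_sum_le
    intro i
    exact le_trans (rank_add_le' _ _)
      (le_trans (add_le_add (rank_vecMulVec_le _ _) (rank_vecMulVec_le _ _)) (by norm_num))
  -- ## the kernel of T
  obtain ⟨occ, hocc⟩ : ∃ occ : ↥A → Fin n, ∀ a, (W.get (occ a)).1 = (a : ℕ) := by
    have hex : ∀ a : ↥A, ∃ s : Fin n, (W.get s).1 = (a : ℕ) := by
      rintro ⟨a, ha⟩
      obtain ⟨s, -, hs⟩ := Finset.mem_image.mp ha
      exact ⟨s, hs⟩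
    exact ⟨fun a => Classical.choose (hex a), fun a => Classical.choose_spec (hex a)⟩
  set Φ : ((Quotient st) → ZMod 2) →ₗ[ZMod 2] (↥A → ZMod 2) :=
    { toFun := fun c a => c (Quotient.mk st (occ a)) + c (Quotient.mk st (occ a + 1)),
      map_add' := by intro c d; funext a; simp; ring
      map_smul' := by intro r c; funext a; simp; ring } with hΦdef
  have hkerT : LinearMap.ker T.mulVecLin ≤ LinearMap.range Φ := by
    intro v hv
    have hv' : T.mulVec v = 0 := by rwa [LinearMap.mem_ker, Matrix.mulVecLin_apply] at hv
    set χ : Fin n → ZMod 2 := fun s => v ⟨(W.get s).1, memA s⟩ with hχdef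
    set G : ℕ → ZMod 2 := fun i => ∑ j : Fin n, if j.val < i then χ j else 0 with hGdef
    have hχσ : ∀ s, χ (σ s) = χ s := by
      intro s
      show v _ = v _
      congr 1
      exact Subtype.ext (hσfst s)
    have hG0 : G 0 = 0 := by
      rw [hGdef]
      apply Finset.sum_eq_zero
      intro j _
      rw [if_neg (by omega)]
    have hGstep : ∀ (i : ℕ) (hi : i < n), G (i + 1) = G i + χ ⟨i, hi⟩ := by
      intro i hi
      have hsplit : ∀ j : Fin n, (if j.val < i + 1 then χ j else 0)
          = (if j.val < i then χ j else 0) + (if j = ⟨i, hi⟩ then χ j else 0) := by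
        intro j
        rcases lt_trichotomy j.val i with hj | hj | hj
        · rw [if_pos (by omega), if_pos hj, if_neg, add_zero]
          intro hc
          rw [hc] at hj
          simp at hj
        · rw [if_pos (by omega), if_neg (by omega), if_pos (Fin.ext hj), zero_add]
        · rw [if_neg (by omega), if_neg (by omega), if_neg, add_zero]
          intro hc
          rw [hc] at hj
          simp at hj
      show (∑ j : Fin n, if j.val < i + 1 then χ j else 0) = _
      rw [Finset.sum_congr rfl fun j _ => hsplit j, Finset.sum_add_distrib]
      congr 1
      rw [Finset.sum_ite_eq' Finset.univ (⟨i, hi⟩ : Fin n) χ, if_pos (Finset.mem_univ _)]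
    have hGall : G n = ∑ j : Fin n, χ j := by
      apply Finset.sum_congr rfl
      intro j _
      rw [if_pos j.isLt]
    have hχsum : (∑ j : Fin n, χ j) = 0 := by
      rw [← Finset.sum_fiberwise_of_maps_to (t := A)
        (g := fun s : Fin n => (W.get s).1) (fun s _ => memA s) χ]
      apply Finset.sum_eq_zero
      intro b hb
      obtain ⟨s, -, hs⟩ := Finset.mem_image.mp hb
      have hfil : Finset.filter (fun t : Fin n => (W.get t).1 = b) Finset.univ = {s, σ s} := by
        rw [← hs]
        exact fiber_eq s
      rw [hfil, Finset.sum_pair (fun hc => hσne s hc.symm), hχσ]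
      exact CharTwo.add_self_eq_zero _
    have hGn : G n = 0 := by rw [hGall, hχsum]
    have hHG : ∀ q : Fin n, (∑ j : Fin n, if q.val < j.val then χ j else 0) = G (q.val + 1) := by
      intro q
      have hsplit : ∀ j : Fin n, χ j
          = (if j.val < q.val + 1 then χ j else 0) + (if q.val < j.val then χ j else 0) := by
        intro j
        rcases le_or_gt j.val q.val with hj | hj
        · rw [if_pos (by omega), if_neg (by omega), add_zero]
        · rw [if_neg (by omega), if_pos hj, zero_add]
      have h1 : (∑ j : Fin n, χ j) = G (q.val + 1) + ∑ j : Fin n, if q.val < j.val then χ j else 0 := by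
        rw [Finset.sum_congr rfl fun j _ => hsplit j, Finset.sum_add_distrib]
      rw [hχsum] at h1
      have c2 : ∀ x y : ZMod 2, 0 = x + y → y = x := by decide
      exact c2 _ _ h1
    -- the relation coming from the chord through s
    have hchord : ∀ s : Fin n, s.val < (σ s).val →
        G (s.val + 1) + G ((σ s).val + 1) + χ s = 0 := by
      intro s hlt
      set b : ↥A := ⟨(W.get s).1, memA s⟩ with hbdef
      have hb0 : (∑ a : ↥A, T b a * v a) = 0 := by
        have := congrFun hv' b
        simpa [Matrix.mulVec, dotProduct] using this
      have hmemiff : ∀ t : Fin n, ((W.get t).1 = (b : ℕ)) ↔ (t = s ∨ t = σ s) := by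
        intro t
        constructor
        · exact hsame s t
        · rintro (rfl | rfl)
          · rfl
          · exact hσfst s
      have key1 : ∀ g : Fin n → ZMod 2,
          (∑ t : Fin n, if (W.get t).1 = (b : ℕ) then g t else 0) = g s + g (σ s) := by
        intro g
        have hpt : ∀ t : Fin n, (if (W.get t).1 = (b : ℕ) then g t else 0)
            = (if t ∈ ({s, σ s} : Finset (Fin n)) then g t else 0) := by
          intro t
          refine if_congr ?_ rfl rfl
          rw [hmemiff t, Finset.mem_insert, Finset.mem_singleton]
        rw [Finset.sum_congr rfl fun t _ => hpt t, Finset.sum_ite_mem,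
          Finset.univ_inter, Finset.sum_pair (fun hc => hσne s hc.symm)]
      have keyA : ∀ j : Fin n, (∑ a : ↥A, if (W.get j).1 = (a : ℕ) then v a else 0) = χ j := by
        intro j
        have hpt : ∀ a : ↥A, (if (W.get j).1 = (a : ℕ) then v a else 0)
            = (if (⟨(W.get j).1, memA j⟩ : ↥A) = a then v a else 0) := by
          intro a
          refine if_congr ?_ rfl rfl
          exact ⟨fun hh => Subtype.ext hh, fun hh => congrArg Subtype.val hh⟩
        rw [Finset.sum_congr rfl fun a _ => hpt a,
          Finset.sum_ite_eq Finset.univ (⟨(W.get j).1, memA j⟩ : ↥A) v,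
          if_pos (Finset.mem_univ _)]
      have hstep1 : (∑ a : ↥A, T b a * v a)
          = (∑ a : ↥A, Pz (b : ℕ) (a : ℕ) W * v a) + Pz (b : ℕ) (b : ℕ) W * v b := by
        have hpt : ∀ a : ↥A, T b a * v a
            = Pz (b : ℕ) (a : ℕ) W * v a
              + (if b = a then Pz (b : ℕ) (a : ℕ) W * v a else 0) := by
          intro a
          simp only [hTdef]
          by_cases hba : b = a
          · subst hba
            rw [if_pos rfl, if_pos rfl, zero_mul]
            have c2 : ∀ x : ZMod 2, (0 : ZMod 2) = x + x := by decide
            exact c2 _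
          · have hba' : (b : ℕ) ≠ (a : ℕ) := fun hc => hba (Subtype.ext hc)
            rw [if_neg hba, if_neg hba', add_zero, z_elt_mod2 _ _ hba' W]
        rw [Finset.sum_congr rfl fun a _ => hpt a, Finset.sum_add_distrib]
        congr 1
        rw [Finset.sum_ite_eq Finset.univ b (fun a => Pz (b : ℕ) (a : ℕ) W * v a),
          if_pos (Finset.mem_univ _)]
      have hPz : ∀ a' : ↥A, Pz (b : ℕ) (a' : ℕ) W
          = ∑ i : Fin n, ∑ j : Fin n,
            if i.val < j.val ∧ (W.get i).1 = (b : ℕ) ∧ (W.get j).1 = (a' : ℕ)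
            then 1 else 0 := fun a' => Pz_eq_sum _ _ W
      have hstep2 : (∑ a : ↥A, Pz (b : ℕ) (a : ℕ) W * v a)
          = (∑ j : Fin n, if s.val < j.val then χ j else 0)
            + (∑ j : Fin n, if (σ s).val < j.val then χ j else 0) := by
        have e1a : ∀ a : ↥A, Pz (b : ℕ) (a : ℕ) W * v a
            = ∑ i : Fin n, ∑ j : Fin n,
              (if i.val < j.val ∧ (W.get i).1 = (b : ℕ) ∧ (W.get j).1 = (a : ℕ)
                then 1 else 0) * v a := by
          intro a
          rw [hPz a, Finset.sum_mul]
          exact Finset.sum_congr rfl fun i _ => Finset.sum_mul _ _ _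
        have e1 : (∑ a : ↥A, Pz (b : ℕ) (a : ℕ) W * v a)
            = ∑ i : Fin n, ∑ j : Fin n, ∑ a : ↥A,
              (if i.val < j.val ∧ (W.get i).1 = (b : ℕ) ∧ (W.get j).1 = (a : ℕ)
                then 1 else 0) * v a := by
          calc (∑ a : ↥A, Pz (b : ℕ) (a : ℕ) W * v a)
              = ∑ a : ↥A, ∑ i : Fin n, ∑ j : Fin n,
                (if i.val < j.val ∧ (W.get i).1 = (b : ℕ) ∧ (W.get j).1 = (a : ℕ)
                  then 1 else 0) * v a := Finset.sum_congr rfl fun a _ => e1a a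
            _ = ∑ i : Fin n, ∑ a : ↥A, ∑ j : Fin n,
                (if i.val < j.val ∧ (W.get i).1 = (b : ℕ) ∧ (W.get j).1 = (a : ℕ)
                  then 1 else 0) * v a := Finset.sum_comm
            _ = ∑ i : Fin n, ∑ j : Fin n, ∑ a : ↥A,
                (if i.val < j.val ∧ (W.get i).1 = (b : ℕ) ∧ (W.get j).1 = (a : ℕ)
                  then 1 else 0) * v a := Finset.sum_congr rfl fun i _ => Finset.sum_comm
        rw [e1]
        have e2 : ∀ i j : Fin n, (∑ a : ↥A,
            (if i.val < j.val ∧ (W.get i).1 = (b : ℕ) ∧ (W.get j).1 = (a : ℕ)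
              then 1 else 0) * v a)
            = if i.val < j.val ∧ (W.get i).1 = (b : ℕ) then χ j else 0 := by
          intro i j
          by_cases h1 : i.val < j.val ∧ (W.get i).1 = (b : ℕ)
          · rw [if_pos h1]
            have hpt2 : ∀ a : ↥A,
                (if i.val < j.val ∧ (W.get i).1 = (b : ℕ) ∧ (W.get j).1 = (a : ℕ)
                  then (1 : ZMod 2) else 0) * v a
                = if (W.get j).1 = (a : ℕ) then v a else 0 := by
              intro a
              by_cases h2 : (W.get j).1 = (a : ℕ)
              · rw [if_pos ⟨h1.1, h1.2, h2⟩, if_pos h2, one_mul]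
              · rw [if_neg (by tauto), if_neg h2, zero_mul]
            rw [Finset.sum_congr rfl fun a _ => hpt2 a, keyA j]
          · rw [if_neg h1]
            apply Finset.sum_eq_zero
            intro a _
            rw [if_neg (by tauto), zero_mul]
        rw [Finset.sum_congr rfl fun i (_ : i ∈ Finset.univ) =>
          Finset.sum_congr rfl fun j _ => e2 i j]
        have e3 : ∀ i : Fin n, (∑ j : Fin n,
            if i.val < j.val ∧ (W.get i).1 = (b : ℕ) then χ j else 0)
            = if (W.get i).1 = (b : ℕ)
              then (∑ j : Fin n, if i.val < j.val then χ j else 0) else 0 := by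
          intro i
          by_cases hQ : (W.get i).1 = (b : ℕ)
          · rw [if_pos hQ]
            exact Finset.sum_congr rfl fun j _ => if_congr (and_iff_left hQ) rfl rfl
          · rw [if_neg hQ]
            apply Finset.sum_eq_zero
            intro j _
            rw [if_neg (by tauto)]
        rw [Finset.sum_congr rfl fun i (_ : i ∈ Finset.univ) => e3 i,
          key1 (fun i => ∑ j : Fin n, if i.val < j.val then χ j else 0)]
      have hPbb : Pz (b : ℕ) (b : ℕ) W = 1 := by
        rw [hPz b]
        have e4 : ∀ i j : Fin n,
            (if i.val < j.val ∧ (W.get i).1 = (b : ℕ) ∧ (W.get j).1 = (b : ℕ)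
              then (1 : ZMod 2) else 0)
            = if (W.get i).1 = (b : ℕ)
              then (if (W.get j).1 = (b : ℕ) then (if i.val < j.val then 1 else 0) else 0)
              else 0 := by
          intro i j
          by_cases hQ : (W.get i).1 = (b : ℕ)
          · by_cases hRR : (W.get j).1 = (b : ℕ)
            · by_cases hP : i.val < j.val
              · rw [if_pos ⟨hP, hQ, hRR⟩, if_pos hQ, if_pos hRR, if_pos hP]
              · rw [if_neg (by tauto), if_pos hQ, if_pos hRR, if_neg hP]
            · rw [if_neg (by tauto), if_pos hQ, if_neg hRR]
          · rw [if_neg (by tauto), if_neg hQ]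
        rw [Finset.sum_congr rfl fun i (_ : i ∈ Finset.univ) =>
          Finset.sum_congr rfl fun j _ => e4 i j]
        have e5 : ∀ i : Fin n, (∑ j : Fin n,
            if (W.get i).1 = (b : ℕ)
            then (if (W.get j).1 = (b : ℕ) then (if i.val < j.val then (1 : ZMod 2) else 0) else 0)
            else 0)
            = if (W.get i).1 = (b : ℕ)
              then ((if i.val < s.val then (1 : ZMod 2) else 0)
                + (if i.val < (σ s).val then 1 else 0)) else 0 := by
          intro i
          by_cases hQ : (W.get i).1 = (b : ℕ)
          · rw [if_pos hQ,
              Finset.sum_congr rfl fun j (_ : j ∈ (Finset.univ : Finset (Fin n))) =>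
                if_pos hQ,
              key1 (fun j => if i.val < j.val then (1 : ZMod 2) else 0)]
          · rw [if_neg hQ,
              Finset.sum_congr rfl fun j (_ : j ∈ (Finset.univ : Finset (Fin n))) =>
                if_neg hQ,
              Finset.sum_const_zero]
        rw [Finset.sum_congr rfl fun i (_ : i ∈ Finset.univ) => e5 i,
          key1 (fun i => (if i.val < s.val then (1 : ZMod 2) else 0)
            + (if i.val < (σ s).val then 1 else 0))]
        rw [if_neg (lt_irrefl s.val), if_pos hlt, if_neg (by omega), if_neg (lt_irrefl (σ s).val)]
        norm_num
      rw [hstep1, hstep2, hPbb, one_mul] at hb0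
      have hvb : v b = χ s := rfl
      rw [hvb] at hb0
      rw [hHG s, hHG (σ s)] at hb0
      exact hb0
    -- wrap-around compatible successor
    have hGhat : ∀ s : Fin n, G ((s + 1 : Fin n).val) = G (s.val + 1) := by
      intro s
      by_cases hlt : s.val + 1 < n
      · congr 1
        rw [hval1, Nat.mod_eq_of_lt hlt]
      · have hn' : s.val + 1 = n := by
          have := s.isLt
          omega
        have h0 : (s + 1 : Fin n).val = 0 := by
          rw [hval1, hn', Nat.mod_self]
        rw [h0, hG0, hn']
        exact hGn.symm
    have hR : ∀ s : Fin n, G ((s + 1 : Fin n).val) = G ((σ s).val) := by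
      intro s
      rcases lt_trichotomy s.val ((σ s).val) with hlt | heq | hgt
      · have hc := hchord s hlt
        have hstep := hGstep ((σ s).val) (σ s).isLt
        simp only [Fin.eta] at hstep
        rw [hGhat]
        have c2 : ∀ x y z w : ZMod 2, x + y + z = 0 → y = w + z → x = w := by decide
        exact c2 _ _ _ _ hc (by rw [hstep, hχσ])
      · exact absurd (Fin.ext heq).symm (hσne s)
      · have hc := hchord (σ s) (by rw [hσσ]; exact hgt)
        rw [hσσ, hχσ] at hc
        rw [hGhat]
        have hstep := hGstep ((σ s).val) (σ s).isLt
        simp only [Fin.eta] at hstep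
        rw [hχσ] at hstep
        have c2 : ∀ x y z w : ZMod 2, x + y + z = 0 → x = w + z → y = w := by decide
        exact c2 _ _ _ _ hc hstep
    have hτinv : ∀ s : Fin n, (fun t : Fin n => G t.val) (τ s) = (fun t : Fin n => G t.val) s := by
      intro s
      show G ((τ s).val) = G s.val
      rw [hτ]
      have := hR (σ s)
      rw [hσσ] at this
      exact this
    refine ⟨fun q => Quotient.liftOn q (fun t : Fin n => G t.val) (hinv_lift _ hτinv), ?_⟩
    have hΦapp : ∀ (c : Quotient st → ZMod 2) (a : ↥A),
        Φ c a = c (Quotient.mk st (occ a)) + c (Quotient.mk st (occ a + 1)) := by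
      intro c a
      rw [hΦdef]
      rfl
    funext a
    rw [hΦapp]
    show G ((occ a).val) + G ((occ a + 1 : Fin n).val) = v a
    rw [hGhat (occ a), hGstep ((occ a).val) (occ a).isLt]
    simp only [Fin.eta]
    have hva : χ (occ a) = v a := by
      show v _ = v a
      congr 1
      exact Subtype.ext (hocc a)
    rw [← hva]
    have c2 : ∀ x y : ZMod 2, x + (x + y) = y := by decide
    exact c2 _ _
  have hΦrank : Module.finrank (ZMod 2) (LinearMap.range Φ) + 1 ≤ V := by
    have hrn := LinearMap.finrank_range_add_finrank_ker Φ
    rw [Module.finrank_pi] at hrn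
    have hker1 : 1 ≤ Module.finrank (ZMod 2) (LinearMap.ker Φ) := by
      have hmem : (fun _ : Quotient st => (1 : ZMod 2)) ∈ LinearMap.ker Φ := by
        apply LinearMap.mem_ker.mpr
        funext a
        show (1 : ZMod 2) + 1 = 0
        decide
      have hne : (fun _ : Quotient st => (1 : ZMod 2)) ≠ 0 := by
        intro hcon
        have := congrFun hcon (Quotient.mk st ⟨0, hnpos⟩)
        simp at this
      have : Nontrivial (LinearMap.ker Φ) := by
        refine ⟨⟨⟨_, hmem⟩, 0, ?_⟩⟩
        intro hcon
        exact hne (congrArg Subtype.val hcon)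
      have := Module.finrank_pos_iff (R := ZMod 2)
        (M := ↥(LinearMap.ker Φ)) |>.mpr this
      omega
    omega
  -- ## conclusion
  have hcardA' : A.card = T.rank + Module.finrank (ZMod 2) (LinearMap.ker T.mulVecLin) := by
    have := LinearMap.finrank_range_add_finrank_ker T.mulVecLin
    rw [Module.finrank_pi] at this
    simp only [Fintype.card_coe] at this
    rw [← this]
    rfl
  have hnull : Module.finrank (ZMod 2) (LinearMap.ker T.mulVecLin)
      ≤ Module.finrank (ZMod 2) (LinearMap.range Φ) :=
    Submodule.finrank_mono hkerT
  have hfinal : n + 6 ≤ 12 * m := by omega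
  have : (n : ℤ) ≤ 12 * (m : ℤ) - 6 := by push_cast; omega
  exact this

end WicksForms
end

section
/- In any group G, if A₁ = ξ₁·A₂·ρ₁, B₁ = ρ₂·B₂·ξ₂, C₁ = ξ₃·C₂·ρ₃ with ξ₁·ξ₂·ξ₃ = 1 and ρ₁·ρ₂·ρ₃ = 1, then A₁·B₁·C₁·A₂⁻¹·B₂⁻¹·C₂⁻¹ is a commutator in G. -/
/-- Form 4: if `A₁ = ξ₁·A₂·ρ₁`, `B₁ = ρ₂·B₂·ξ₂`, `C₁ = ξ₃·C₂·ρ₃` with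
`ξ₁·ξ₂·ξ₃ = 1` and `ρ₁·ρ₂·ρ₃ = 1`, then `A₁·B₁·C₁·A₂⁻¹·B₂⁻¹·C₂⁻¹` is a commutator. -/
theorem form_four_is_commutator (G : Type*) [Group G]
    (A₁ A₂ B₁ B₂ C₁ C₂ ξ₁ ξ₂ ξ₃ ρ₁ ρ₂ ρ₃ : G)
    (hA : A₁ = ξ₁ * A₂ * ρ₁) (hB : B₁ = ρ₂ * B₂ * ξ₂) (hC : C₁ = ξ₃ * C₂ * ρ₃)
    (hξ : ξ₁ * ξ₂ * ξ₃ = 1) (hρ : ρ₁ * ρ₂ * ρ₃ = 1) :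
    ∃ x y : G, A₁ * B₁ * C₁ * A₂⁻¹ * B₂⁻¹ * C₂⁻¹ = x * y * x⁻¹ * y⁻¹ := by
  have hξ2 : ξ₂ = ξ₁⁻¹ * ξ₃⁻¹ := by
    calc ξ₂ = ξ₁⁻¹ * (ξ₁ * ξ₂ * ξ₃) * ξ₃⁻¹ := by group
    _ = ξ₁⁻¹ * ξ₃⁻¹ := by rw [hξ]; group
  have hρ2 : ρ₂ = ρ₁⁻¹ * ρ₃⁻¹ := by
    calc ρ₂ = ρ₁⁻¹ * (ρ₁ * ρ₂ * ρ₃) * ρ₃⁻¹ := by group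
    _ = ρ₁⁻¹ * ρ₃⁻¹ := by rw [hρ]; group
  refine ⟨ξ₁ * A₂ * ρ₃⁻¹ * C₂⁻¹, C₂ * B₂ * ξ₁⁻¹, ?_⟩
  subst hA hB hC hξ2 hρ2
  group
end

section
/- Let G = G₁ * G₂ * ⋯ be a free product. If v ∈ G is a commutator and v lies in a conjugate w·Gᵢ·w⁻¹ of a free factor, then v is a commutator in w·Gᵢ·w⁻¹, i.e., there exist x, y ∈ Gᵢ with v = w·[x,y]·w⁻¹. -/
private def retrHom {ι : Type*} (G : ι → Type*) [∀ i, Group (G i)] {j i : ι}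
    (h : j = i) : G j →* G i := by subst h; exact MonoidHom.id _

@[simp] private lemma retrHom_rfl {ι : Type*} (G : ι → Type*) [∀ i, Group (G i)] {i : ι} :
    retrHom G (rfl : i = i) = MonoidHom.id (G i) := rfl

/-- In a free product `G = *ᵢ Gᵢ`, a commutator lying in a conjugate `w·Gᵢ·w⁻¹` of a free
factor is a commutator of that conjugate: there exist `x, y ∈ Gᵢ` with
`v = w·[x,y]·w⁻¹`. -/
theorem free_product_commutator_in_conjugate_factor
    (ι : Type*) (G : ι → Type*) [∀ i, Group (G i)] (i : ι)
    (w : Monoid.CoprodI G) (g : G i)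
    (hcomm : ∃ x y : Monoid.CoprodI G,
      w * Monoid.CoprodI.of g * w⁻¹ = x * y * x⁻¹ * y⁻¹) :
    ∃ x y : G i,
      w * Monoid.CoprodI.of g * w⁻¹ =
        w * Monoid.CoprodI.of (x * y * x⁻¹ * y⁻¹) * w⁻¹ := by
  classical
  obtain ⟨x, y, hxy⟩ := hcomm
  -- retraction onto the i-th factor
  set f : ∀ j, G j →* G i := fun j =>
    if h : j = i then retrHom G h else 1 with hf
  set π : Monoid.CoprodI G →* G i := Monoid.CoprodI.lift f with hπ
  have hπg : π (Monoid.CoprodI.of g) = g := by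
    simp [hπ, hf, Monoid.CoprodI.lift_of]
  have hog : Monoid.CoprodI.of g = (w⁻¹ * x * w) * (w⁻¹ * y * w) *
      (w⁻¹ * x * w)⁻¹ * (w⁻¹ * y * w)⁻¹ := by
    have : Monoid.CoprodI.of g = w⁻¹ * (x * y * x⁻¹ * y⁻¹) * w := by
      rw [← hxy]; group
    rw [this]; group
  refine ⟨π (w⁻¹ * x * w), π (w⁻¹ * y * w), ?_⟩
  have : g = π (w⁻¹ * x * w) * π (w⁻¹ * y * w) * (π (w⁻¹ * x * w))⁻¹ *
      (π (w⁻¹ * y * w))⁻¹ := by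
    rw [← map_inv, ← map_inv, ← map_mul, ← map_mul, ← map_mul, ← hog, hπg]
  rw [← this]
end

section
/- In any group G, if X·a₁·Y·a₂·X⁻¹·a₃·Y⁻¹·a₄ is given with a₄·a₃·a₂·a₁ = 1, then X·a₁·Y·a₂·X⁻¹·a₃·Y⁻¹·a₄ is a commutator in G. -/
/-- Wicks form 2 for free products, algebraic direction: if `a₄·a₃·a₂·a₁ = 1`, then
`X·a₁·Y·a₂·X⁻¹·a₃·Y⁻¹·a₄` is a commutator. -/
theorem wicks_free_product_form_two (G : Type*) [Group G]
    (X Y a₁ a₂ a₃ a₄ : G) (h : a₄ * a₃ * a₂ * a₁ = 1) :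
    ∃ u v : G, X * a₁ * Y * a₂ * X⁻¹ * a₃ * Y⁻¹ * a₄ = u * v * u⁻¹ * v⁻¹ := by
  have h4 : a₄ = a₁⁻¹ * a₂⁻¹ * a₃⁻¹ := by
    have h' : a₄ * (a₃ * a₂ * a₁) = 1 := by rw [← h]; group
    rw [eq_inv_of_mul_eq_one_left h']; group
  refine ⟨X * a₂⁻¹ * a₃⁻¹, a₃ * a₂ * a₁ * Y * a₃⁻¹, ?_⟩
  subst h4
  group
end

section
/- In any group G, if elements satisfy a₃·a₂·a₁ = 1 and b₃·b₂·b₁ = 1, then X·a₁·Y·b₁·Z·a₂·X⁻¹·b₂·Y⁻¹·a₃·Z⁻¹·b₃ is a commutator in G for any X, Y, Z ∈ G. -/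
/-- Wicks form 3 for free products, algebraic direction: if `a₃·a₂·a₁ = 1` and
`b₃·b₂·b₁ = 1`, then `X·a₁·Y·b₁·Z·a₂·X⁻¹·b₂·Y⁻¹·a₃·Z⁻¹·b₃` is a commutator. -/
theorem wicks_free_product_form_three (G : Type*) [Group G]
    (X Y Z a₁ a₂ a₃ b₁ b₂ b₃ : G)
    (ha : a₃ * a₂ * a₁ = 1) (hb : b₃ * b₂ * b₁ = 1) :
    ∃ u v : G,
      X * a₁ * Y * b₁ * Z * a₂ * X⁻¹ * b₂ * Y⁻¹ * a₃ * Z⁻¹ * b₃ =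
        u * v * u⁻¹ * v⁻¹ := by
  have ha' : a₁ = a₂⁻¹ * a₃⁻¹ := by
    apply mul_left_cancel (a := a₃ * a₂)
    rw [ha]; group
  have hb' : b₁ = b₂⁻¹ * b₃⁻¹ := by
    apply mul_left_cancel (a := b₃ * b₂)
    rw [hb]; group
  refine ⟨X * a₁ * Y * b₂⁻¹, b₃⁻¹ * Z * a₃⁻¹ * Y * b₂⁻¹, ?_⟩
  subst ha' hb'
  group
end
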